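/- arXiv:2305.12415 — 2 statements merged into one kernel-verified Lean document; each statement's English description precedes it below -/
import Mathlib

section
/- Let q be an odd prime power. The three-dimensional Paley matrix H on PG(1,q) is a three-dimensional Hadamard matrix of order q+1: for each of the three coordinate positions and all a, b ∈ PG(1,q), ∑_{x,y ∈ PG(1,q)} H(x,y,a)·H(x,y,b) = (q+1)²·δ_{ab} (and the analogous identities hold when a, b are placed in the first or second coordinate). -/
open Finset

/-- The quadratic character on a field: `χ(a) = 1` if `a` is a (nonzero) square
and `χ(a) = -1` if `a` is a non-square. (Its value at `0` is irrelevant below: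
it is only ever applied to nonzero field elements.) -/
noncomputable def chi {F : Type*} [Field F] (a : F) : ℤ := by
  classical exact if IsSquare a then 1 else -1

/-- The three-dimensional Paley matrix on the projective line
`PG(1,q) = {∞} ∪ 𝔽_q`, modelled as `Option F` with `none = ∞`:
`H(x,y,z) = -1` if `x = y = z`; `H(x,y,z) = 1` if exactly two of `x,y,z` are
equal; and for pairwise distinct coordinates `H(∞,y,z) = χ(z-y)`,
`H(x,∞,z) = χ(x-z)`, `H(x,y,∞) = χ(y-x)`, and
`H(x,y,z) = χ((x-y)(y-z)(z-x))` when `x,y,z ∈ 𝔽_q`. -/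
noncomputable def paleyH {F : Type*} [Field F] [DecidableEq F] :
    Option F → Option F → Option F → ℤ := fun x y z =>
  if x = y ∧ y = z then -1
  else if x = y ∨ y = z ∨ z = x then 1
  else match x, y, z with
    | none, some b, some c => chi (c - b)
    | some a, none, some c => chi (a - c)
    | some a, some b, none => chi (b - a)
    | some a, some b, some c => chi ((a - b) * (b - c) * (c - a))
    | _, _, _ => 1

section Aux
set_option linter.unusedSectionVars false
variable {F : Type*} [Field F] [Fintype F] [DecidableEq F]

lemma chi_zero : chi (0 : F) = 1 := by simp [chi]

lemma chi_eq_one_or' (a : F) : chi a = 1 ∨ chi a = -1 := by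
  unfold chi; split <;> simp

lemma chi_mul_self (a : F) : chi a * chi a = 1 := by
  rcases chi_eq_one_or' a with h | h <;> rw [h] <;> ring

lemma chi_eq_quad {a : F} (ha : a ≠ 0) : chi a = quadraticChar F a := by
  unfold chi
  by_cases h : IsSquare a
  · simp [h, (quadraticChar_one_iff_isSquare ha).mpr h]
  · simp only [h, if_false]
    rw [quadraticChar_apply, quadraticCharFun]
    simp [ha, h]

lemma chi_eq_quad_add (a : F) :
    chi a = quadraticChar F a + (if a = 0 then 1 else 0) := by
  by_cases h : a = 0
  · simp [h, chi_zero]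
  · simp [h, chi_eq_quad h]

lemma chi_mul {a b : F} (ha : a ≠ 0) (hb : b ≠ 0) :
    chi (a * b) = chi a * chi b := by
  rw [chi_eq_quad (mul_ne_zero ha hb), chi_eq_quad ha, chi_eq_quad hb, map_mul]

lemma chi_neg {a : F} (ha : a ≠ 0) : chi (-a) = chi (-1 : F) * chi a := by
  rw [← chi_mul (by norm_num) ha]; ring_nf

lemma chi_sub_comm {a b : F} (h : a ≠ b) :
    chi (a - b) = chi (-1 : F) * chi (b - a) := by
  rw [← chi_neg (by exact sub_ne_zero.mpr h.symm)]; ring_nf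

-- ring char ne two
lemma ringChar_ne_two_of_odd (hq : Odd (Fintype.card F)) : ringChar F ≠ 2 := by
  intro h
  have h2 := FiniteField.even_card_of_char_two h
  have h1 := Nat.odd_iff.mp hq
  omega

lemma quad_sum_shift (hq : Odd (Fintype.card F)) (c : F) :
    ∑ y : F, quadraticChar F (y - c) = 0 := by
  have := quadraticChar_sum_zero (ringChar_ne_two_of_odd hq)
  calc ∑ y : F, quadraticChar F (y - c) = ∑ y : F, quadraticChar F y :=
        Fintype.sum_equiv (Equiv.subRight c) _ _ (fun y => rfl)
    _ = 0 := this

-- key quadratic sum:  ∑ z, Q z * Q (z + e) = -1  for e ≠ 0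
lemma quad_sum_mul (hq : Odd (Fintype.card F)) {e : F} (he : e ≠ 0) :
    ∑ z : F, quadraticChar F z * quadraticChar F (z + e) = -1 := by
  have hF := ringChar_ne_two_of_odd hq
  have h0 : ∑ z : F, quadraticChar F z * quadraticChar F (z + e)
      = ∑ z ∈ univ.erase (0 : F), quadraticChar F z * quadraticChar F (z + e) := by
    rw [Finset.sum_erase_eq_sub (mem_univ 0)]
    simp
  rw [h0]
  have h1 : ∀ z ∈ univ.erase (0 : F),
      quadraticChar F z * quadraticChar F (z + e)
        = quadraticChar F (1 + e * z⁻¹) := by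
    intro z hz
    have hz0 : z ≠ 0 := (mem_erase.mp hz).1
    have : z + e = z * (1 + e * z⁻¹) := by field_simp
    rw [this, map_mul, ← mul_assoc, ← sq, quadraticChar_sq_one hz0, one_mul]
  rw [Finset.sum_congr rfl h1]
  have h2 : ∑ z ∈ univ.erase (0 : F), quadraticChar F (1 + e * z⁻¹)
      = ∑ w ∈ univ.erase (1 : F), quadraticChar F w := by
    apply Finset.sum_nbij' (fun z => 1 + e * z⁻¹) (fun w => e * (w - 1)⁻¹)
    · intro z hz
      have hz0 : z ≠ 0 := (mem_erase.mp hz).1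
      simp only [mem_erase, mem_univ, and_true]
      intro h
      have : e * z⁻¹ = 0 := by linear_combination h
      rcases mul_eq_zero.mp this with h | h
      · exact he h
      · exact hz0 (inv_eq_zero.mp h)
    · intro w hw
      have hw1 : w ≠ 1 := (mem_erase.mp hw).1
      simp only [mem_erase, mem_univ, and_true]
      exact mul_ne_zero he (inv_ne_zero (sub_ne_zero.mpr hw1))
    · intro z hz
      have hz0 : z ≠ 0 := (mem_erase.mp hz).1
      field_simp
      rw [show z + e - z = e by ring]; exact div_self he
    · intro w hw
      have hw1 : w ≠ 1 := (mem_erase.mp hw).1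
      have : w - 1 ≠ 0 := sub_ne_zero.mpr hw1
      field_simp
      ring
    · intro z hz; rfl
  rw [h2, Finset.sum_erase_eq_sub (mem_univ 1), quadraticChar_sum_zero hF]
  simp

lemma sum_chi_sub (hq : Odd (Fintype.card F)) (c : F) : ∑ y : F, chi (y - c) = 1 := by
  have : ∀ y : F, chi (y - c) = quadraticChar F (y - c) + (if y = c then 1 else 0) := by
    intro y
    rw [chi_eq_quad_add]
    congr 1
    simp [sub_eq_zero]
  rw [Finset.sum_congr rfl (fun y _ => this y), Finset.sum_add_distrib, quad_sum_shift hq c]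
  simp

lemma sum_chi_sub' (hq : Odd (Fintype.card F)) (c : F) : ∑ y : F, chi (c - y) = 1 := by
  calc ∑ y : F, chi (c - y) = ∑ y : F, chi (y - c) :=
        Fintype.sum_equiv (Equiv.subLeft (c + c)) _ _ (fun y => by simp [Equiv.subLeft]; ring_nf)
    _ = 1 := sum_chi_sub hq c

lemma sum_chi_mul2 (hq : Odd (Fintype.card F)) {c d : F} (h : c ≠ d) :
    ∑ y : F, chi ((y - c) * (y - d)) = 1 := by
  have key : ∀ y : F, chi ((y - c) * (y - d))
      = quadraticChar F (y - c) * quadraticChar F (y - d)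
        + ((if y = c then 1 else 0) + (if y = d then 1 else 0)) := by
    intro y
    rw [chi_eq_quad_add, map_mul]
    by_cases hc : y = c
    · simp [hc, sub_eq_zero, h, (Ne.symm h : d ≠ c)]
    · by_cases hd : y = d
      · simp [hd, sub_eq_zero, hc, (Ne.symm h : d ≠ c)]
      · have : (y - c) * (y - d) ≠ 0 :=
          mul_ne_zero (sub_ne_zero.mpr hc) (sub_ne_zero.mpr hd)
        simp [this, hc, hd]
  rw [Finset.sum_congr rfl (fun y _ => key y), Finset.sum_add_distrib,
    Finset.sum_add_distrib]
  have hQ : ∑ y : F, quadraticChar F (y - c) * quadraticChar F (y - d) = -1 := by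
    have he : c - d ≠ 0 := sub_ne_zero.mpr h
    calc ∑ y : F, quadraticChar F (y - c) * quadraticChar F (y - d)
        = ∑ z : F, quadraticChar F z * quadraticChar F (z + (c - d)) :=
          Fintype.sum_equiv (Equiv.subRight c) _ _ (fun y => by simp [Equiv.subRight])
      _ = -1 := quad_sum_mul hq he
  rw [hQ]
  simp

lemma paleyH_eq_one_or (x y z : Option F) : paleyH x y z = 1 ∨ paleyH x y z = -1 := by
  rcases x with _ | a <;> rcases y with _ | b <;> rcases z with _ | c <;>
    simp only [paleyH] <;> split_ifs <;>
    first | exact Or.inl rfl | exact Or.inr rfl | apply chi_eq_one_or'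

lemma paleyH_cyc (x y z : Option F) : paleyH x y z = paleyH z x y := by
  rcases x with _ | a <;> rcases y with _ | b <;> rcases z with _ | c <;>
    simp only [paleyH] <;> split_ifs <;>
    first
      | rfl
      | (try simp_all) <;> (try tauto) <;> (try ring_nf)

lemma pH_nnn : paleyH (none : Option F) none none = -1 := by simp [paleyH]
lemma pH_snn (β : F) : paleyH (some β) none none = 1 := by simp [paleyH]
lemma pH_nns (c : F) : paleyH (none : Option F) none (some c) = 1 := by simp [paleyH]
lemma pH_sns (β c : F) : paleyH (some β) none (some c) = chi (β - c) := by
  by_cases h : c = β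
  · simp [paleyH, h, chi_zero]
  · simp [paleyH, h, Ne.symm h]
lemma pH_nsn (t : F) : paleyH none (some t) (none : Option F) = 1 := by simp [paleyH]
lemma pH_nss (t c : F) : paleyH none (some t) (some c) = chi (c - t) := by
  by_cases h : t = c
  · simp [paleyH, h, chi_zero]
  · simp [paleyH, h]
lemma pH_ssn (β t : F) : paleyH (some β) (some t) none = chi (t - β) := by
  by_cases h : β = t
  · simp [paleyH, h, chi_zero]
  · simp [paleyH, h]
lemma pH_bbs (β c : F) : paleyH (some β) (some β) (some c)
    = if c = β then -1 else 1 := by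
  by_cases h : c = β
  · simp [paleyH, h]
  · simp [paleyH, h, Ne.symm h]
lemma pH_btt (β t : F) (h : β ≠ t) : paleyH (some β) (some t) (some t) = 1 := by
  simp [paleyH, h]
lemma pH_btb (β t : F) (h : β ≠ t) : paleyH (some β) (some t) (some β) = 1 := by
  simp [paleyH, h, Ne.symm h]
lemma pH_gen (β t c : F) (h1 : β ≠ t) (h2 : t ≠ c) (h3 : c ≠ β) :
    paleyH (some β) (some t) (some c) = chi ((β - t) * (t - c) * (c - β)) := by
  simp [paleyH, h1, h2, h3]

lemma chi_split3 {u v w : F} (hu : u ≠ 0) (hv : v ≠ 0) (hw : w ≠ 0) :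
    chi (u * v * w) = chi u * chi v * chi w := by
  rw [chi_mul (mul_ne_zero hu hv) hw, chi_mul hu hv]

lemma keyA (hq : Odd (Fintype.card F)) (β : F) :
    ∑ x : Option F, ∑ y : Option F, paleyH none x y * paleyH (some β) x y = 0 := by
  rw [Fintype.sum_option]
  -- the x = ∞ row
  have row_inf : ∑ y : Option F, paleyH none none y * paleyH (some β) none y = 0 := by
    rw [Fintype.sum_option, pH_nnn, pH_snn]
    simp only [pH_nns, pH_sns, one_mul]
    rw [sum_chi_sub' hq β]; ring
  -- the x = β row
  have row_beta : ∑ y : Option F, paleyH none (some β) y * paleyH (some β) (some β) y = 0 := by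
    rw [Fintype.sum_option, pH_nsn, pH_ssn]
    simp only [pH_nss, pH_bbs]
    rw [← Finset.add_sum_erase univ _ (mem_univ β)]
    have h1 : ∑ c ∈ univ.erase β, chi (c - β) * (if c = β then -1 else 1)
        = ∑ c ∈ univ.erase β, chi (c - β) := by
      refine Finset.sum_congr rfl fun c hc => ?_
      simp [(mem_erase.mp hc).1]
    rw [h1, Finset.sum_erase_eq_sub (mem_univ β), sum_chi_sub hq β]
    simp [chi_zero]
  -- a generic row x = t, t ≠ β
  have row_t : ∀ t : F, t ≠ β →
      ∑ y : Option F, paleyH none (some t) y * paleyH (some β) (some t) y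
        = chi (t - β) + chi (β - t) := by
    intro t ht
    rw [Fintype.sum_option, pH_nsn, pH_ssn]
    simp only [pH_nss]
    have hβmem : β ∈ univ.erase t := mem_erase.mpr ⟨Ne.symm ht, mem_univ β⟩
    rw [← Finset.add_sum_erase univ _ (mem_univ t), ← Finset.add_sum_erase _ _ hβmem]
    rw [pH_btt β t (Ne.symm ht), pH_btb β t (Ne.symm ht)]
    have hgen : ∑ c ∈ (univ.erase t).erase β,
        chi (c - t) * paleyH (some β) (some t) (some c)
        = ∑ c ∈ (univ.erase t).erase β, chi (-1 : F) * chi (β - t) * chi (c - β) := by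
      refine Finset.sum_congr rfl fun c hc => ?_
      have hcβ : c ≠ β := (mem_erase.mp hc).1
      have hct : c ≠ t := (mem_erase.mp (mem_erase.mp hc).2).1
      rw [pH_gen β t c (Ne.symm ht) (Ne.symm hct) hcβ]
      have e1 : (β - t) ≠ 0 := sub_ne_zero.mpr (Ne.symm ht)
      have e2 : (t - c) ≠ 0 := sub_ne_zero.mpr (Ne.symm hct)
      have e3 : (c - β) ≠ 0 := sub_ne_zero.mpr hcβ
      rw [chi_split3 e1 e2 e3, chi_sub_comm (Ne.symm hct)]
      linear_combination chi (-1 : F) * chi (β - t) * chi (c - β) * chi_mul_self (c - t)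
    rw [hgen, ← Finset.mul_sum]
    rw [Finset.sum_erase_eq_sub hβmem, Finset.sum_erase_eq_sub (mem_univ t),
      sum_chi_sub hq β]
    rw [sub_self, chi_zero, sub_self, chi_zero]
    -- atoms: chi (t - β), chi (β - t), chi (-1)
    rw [chi_sub_comm ht]
    rcases chi_eq_one_or' (β - t) with h1 | h1 <;>
      rcases chi_eq_one_or' (-1 : F) with h2 | h2 <;>
      rw [h1, h2] <;> ring
  -- assemble the outer sum
  rw [row_inf, ← Finset.add_sum_erase univ _ (mem_univ β), row_beta]
  have h2 : ∑ t ∈ univ.erase β,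
      (∑ y : Option F, paleyH none (some t) y * paleyH (some β) (some t) y)
      = ∑ t ∈ univ.erase β, (chi (t - β) + chi (β - t)) := by
    refine Finset.sum_congr rfl fun t ht => row_t t (mem_erase.mp ht).1
  rw [h2, Finset.sum_add_distrib,
    Finset.sum_erase_eq_sub (mem_univ β), Finset.sum_erase_eq_sub (mem_univ β),
    sum_chi_sub hq β, sum_chi_sub' hq β]
  simp [chi_zero]

lemma sum_chi_pair (hq : Odd (Fintype.card F)) {α β : F} (hab : α ≠ β) :
    ∑ c ∈ (univ.erase α).erase β, chi ((c - α) * (c - β)) = -1 := by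
  have hβα : β ∈ univ.erase α := mem_erase.mpr ⟨Ne.symm hab, mem_univ β⟩
  rw [Finset.sum_erase_eq_sub hβα, Finset.sum_erase_eq_sub (mem_univ α),
    sum_chi_mul2 hq hab]
  simp [chi_zero]

lemma keyB (hq : Odd (Fintype.card F)) {α β : F} (hab : α ≠ β) :
    ∑ x : Option F, ∑ y : Option F, paleyH (some α) x y * paleyH (some β) x y = 0 := by
  have hba : β ≠ α := Ne.symm hab
  have e1 : α - β ≠ 0 := sub_ne_zero.mpr hab
  have e2 : β - α ≠ 0 := sub_ne_zero.mpr hba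
  rw [Fintype.sum_option]
  have hβα : β ∈ univ.erase α := mem_erase.mpr ⟨hba, mem_univ β⟩
  -- x = ∞ row
  have row_inf : ∑ y : Option F, paleyH (some α) none y * paleyH (some β) none y
      = chi (β - α) + chi (α - β) := by
    rw [Fintype.sum_option, pH_snn, pH_snn]
    simp only [pH_sns]
    rw [← Finset.add_sum_erase univ _ (mem_univ α), ← Finset.add_sum_erase _ _ hβα]
    have hgen : ∑ c ∈ (univ.erase α).erase β, chi (α - c) * chi (β - c)
        = ∑ c ∈ (univ.erase α).erase β, chi ((c - α) * (c - β)) := by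
      refine Finset.sum_congr rfl fun c hc => ?_
      have hcβ : c ≠ β := (mem_erase.mp hc).1
      have hcα : c ≠ α := (mem_erase.mp (mem_erase.mp hc).2).1
      rw [chi_sub_comm (Ne.symm hcα), chi_sub_comm (Ne.symm hcβ),
        chi_mul (sub_ne_zero.mpr hcα) (sub_ne_zero.mpr hcβ)]
      linear_combination chi (c - α) * chi (c - β) * chi_mul_self (-1 : F)
    rw [hgen, sum_chi_pair hq hab]
    simp only [sub_self, chi_zero]
    ring
  -- x = α row
  have row_alpha : ∑ y : Option F, paleyH (some α) (some α) y * paleyH (some β) (some α) y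
      = 0 := by
    rw [Fintype.sum_option, pH_ssn, pH_ssn]
    simp only [pH_bbs]
    rw [← Finset.add_sum_erase univ _ (mem_univ α), ← Finset.add_sum_erase _ _ hβα]
    rw [pH_btt β α hba, pH_btb β α hba, if_pos rfl, if_neg hba]
    have hgen : ∑ c ∈ (univ.erase α).erase β,
        (if c = α then (-1 : ℤ) else 1) * paleyH (some β) (some α) (some c)
        = ∑ c ∈ (univ.erase α).erase β,
            chi (-1 : F) * chi (β - α) * chi ((c - α) * (c - β)) := by
      refine Finset.sum_congr rfl fun c hc => ?_
      have hcβ : c ≠ β := (mem_erase.mp hc).1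
      have hcα : c ≠ α := (mem_erase.mp (mem_erase.mp hc).2).1
      rw [if_neg hcα, one_mul, pH_gen β α c hba (Ne.symm hcα) hcβ]
      have f1 : α - c ≠ 0 := sub_ne_zero.mpr (Ne.symm hcα)
      have f2 : c - β ≠ 0 := sub_ne_zero.mpr hcβ
      have f3 : c - α ≠ 0 := sub_ne_zero.mpr hcα
      rw [chi_split3 e2 f1 f2, chi_sub_comm (Ne.symm hcα), chi_mul f3 f2]
      ring
    rw [hgen, ← Finset.mul_sum, sum_chi_pair hq hab]
    simp only [sub_self, chi_zero]
    rw [chi_sub_comm hab]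
    ring
  -- x = β row
  have row_beta : ∑ y : Option F, paleyH (some α) (some β) y * paleyH (some β) (some β) y
      = 0 := by
    rw [Fintype.sum_option, pH_ssn, pH_ssn]
    simp only [pH_bbs]
    rw [← Finset.add_sum_erase univ _ (mem_univ α), ← Finset.add_sum_erase _ _ hβα]
    rw [pH_btb α β hab, pH_btt α β hab, if_neg hab, if_pos rfl]
    have hgen : ∑ c ∈ (univ.erase α).erase β,
        paleyH (some α) (some β) (some c) * (if c = β then (-1 : ℤ) else 1)
        = ∑ c ∈ (univ.erase α).erase β,
            chi (-1 : F) * chi (α - β) * chi ((c - α) * (c - β)) := by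
      refine Finset.sum_congr rfl fun c hc => ?_
      have hcβ : c ≠ β := (mem_erase.mp hc).1
      have hcα : c ≠ α := (mem_erase.mp (mem_erase.mp hc).2).1
      rw [if_neg hcβ, mul_one, pH_gen α β c hab (Ne.symm hcβ) hcα]
      have f1 : β - c ≠ 0 := sub_ne_zero.mpr (Ne.symm hcβ)
      have f2 : c - α ≠ 0 := sub_ne_zero.mpr hcα
      have f3 : c - β ≠ 0 := sub_ne_zero.mpr hcβ
      rw [chi_split3 e1 f1 f2, chi_sub_comm (Ne.symm hcβ), chi_mul f2 f3]
      ring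
    rw [hgen, ← Finset.mul_sum, sum_chi_pair hq hab]
    simp only [sub_self, chi_zero]
    rw [chi_sub_comm hab]
    rcases chi_eq_one_or' (β - α) with h1 | h1 <;>
      rcases chi_eq_one_or' (-1 : F) with h2 | h2 <;> rw [h1, h2] <;> ring
  -- generic row x = t
  have row_t : ∀ t : F, t ≠ α → t ≠ β →
      ∑ y : Option F, paleyH (some α) (some t) y * paleyH (some β) (some t) y
        = (1 + chi (-1 : F)) * chi (β - α) * chi ((t - α) * (t - β)) := by
    intro t htα htβ
    have g1 : t - α ≠ 0 := sub_ne_zero.mpr htα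
    have g2 : t - β ≠ 0 := sub_ne_zero.mpr htβ
    have g3 : α - t ≠ 0 := sub_ne_zero.mpr (Ne.symm htα)
    have g4 : β - t ≠ 0 := sub_ne_zero.mpr (Ne.symm htβ)
    rw [Fintype.sum_option, pH_ssn, pH_ssn]
    have htmem : t ∈ (univ.erase α).erase β :=
      mem_erase.mpr ⟨htβ, mem_erase.mpr ⟨htα, mem_univ t⟩⟩
    rw [← Finset.add_sum_erase univ _ (mem_univ α), ← Finset.add_sum_erase _ _ hβα,
      ← Finset.add_sum_erase _ _ htmem]
    rw [pH_btb α t (Ne.symm htα), pH_gen β t α (Ne.symm htβ) htα hab,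
      pH_gen α t β (Ne.symm htα) htβ hba, pH_btb β t (Ne.symm htβ),
      pH_btt α t (Ne.symm htα), pH_btt β t (Ne.symm htβ)]
    have hgen : ∑ c ∈ ((univ.erase α).erase β).erase t,
        paleyH (some α) (some t) (some c) * paleyH (some β) (some t) (some c)
        = ∑ c ∈ ((univ.erase α).erase β).erase t,
            chi (t - α) * chi (t - β) * chi ((c - α) * (c - β)) := by
      refine Finset.sum_congr rfl fun c hc => ?_
      have hct : c ≠ t := (mem_erase.mp hc).1
      have hcβ : c ≠ β := (mem_erase.mp (mem_erase.mp hc).2).1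
      have hcα : c ≠ α := (mem_erase.mp (mem_erase.mp (mem_erase.mp hc).2).2).1
      rw [pH_gen α t c (Ne.symm htα) (Ne.symm hct) hcα,
        pH_gen β t c (Ne.symm htβ) (Ne.symm hct) hcβ]
      have f1 : t - c ≠ 0 := sub_ne_zero.mpr (Ne.symm hct)
      have f2 : c - α ≠ 0 := sub_ne_zero.mpr hcα
      have f3 : c - β ≠ 0 := sub_ne_zero.mpr hcβ
      rw [chi_split3 g3 f1 f2, chi_split3 g4 f1 f3,
        chi_sub_comm (Ne.symm htα), chi_sub_comm (Ne.symm htβ), chi_mul f2 f3]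
      linear_combination (chi (t - α) * chi (t - β) * chi (c - α) * chi (c - β)
          * chi (t - c) * chi (t - c)) * chi_mul_self (-1 : F)
        + (chi (t - α) * chi (t - β) * chi (c - α) * chi (c - β)) * chi_mul_self (t - c)
    have hsum3 : ∑ c ∈ ((univ.erase α).erase β).erase t, chi ((c - α) * (c - β))
        = -1 - chi ((t - α) * (t - β)) := by
      rw [Finset.sum_erase_eq_sub htmem, sum_chi_pair hq hab]
    rw [hgen, ← Finset.mul_sum, hsum3]
    -- atomize remaining chi's
    rw [chi_split3 g4 g1 e1, chi_split3 g3 g2 e2, chi_mul g1 g2,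
      chi_sub_comm (Ne.symm htα), chi_sub_comm (Ne.symm htβ), chi_sub_comm hab]
    rcases chi_eq_one_or' (t - α) with h1 | h1 <;>
      rcases chi_eq_one_or' (t - β) with h2 | h2 <;>
      rcases chi_eq_one_or' (β - α) with h3 | h3 <;>
      rcases chi_eq_one_or' (-1 : F) with h4 | h4 <;>
      rw [h1, h2, h3, h4] <;> ring
  -- assemble
  rw [row_inf, ← Finset.add_sum_erase univ _ (mem_univ α), row_alpha,
    ← Finset.add_sum_erase _ _ hβα, row_beta]
  have hrest : ∑ t ∈ (univ.erase α).erase β,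
      (∑ y : Option F, paleyH (some α) (some t) y * paleyH (some β) (some t) y)
      = ∑ t ∈ (univ.erase α).erase β,
          (1 + chi (-1 : F)) * chi (β - α) * chi ((t - α) * (t - β)) := by
    refine Finset.sum_congr rfl fun t ht => ?_
    exact row_t t (mem_erase.mp (mem_erase.mp ht).2).1 (mem_erase.mp ht).1
  rw [hrest, ← Finset.mul_sum, sum_chi_pair hq hab, chi_sub_comm hab]
  rcases chi_eq_one_or' (β - α) with h1 | h1 <;>
    rcases chi_eq_one_or' (-1 : F) with h2 | h2 <;> rw [h1, h2] <;> ring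

lemma paleyH_mul_self (x y z : Option F) : paleyH x y z * paleyH x y z = 1 := by
  rcases paleyH_eq_one_or x y z with h | h <;> rw [h] <;> norm_num

lemma layer_orth (hq : Odd (Fintype.card F)) (a b : Option F) :
    ∑ x : Option F, ∑ y : Option F, paleyH a x y * paleyH b x y
      = if a = b then ((Fintype.card F : ℤ) + 1) ^ 2 else 0 := by
  by_cases h : a = b
  · subst h
    rw [if_pos rfl,
      Finset.sum_congr rfl fun x _ => Finset.sum_congr rfl fun y _ => paleyH_mul_self a x y]
    simp [Finset.card_univ, Fintype.card_option]
    push_cast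
    ring
  · rw [if_neg h]
    match a, b with
    | none, none => exact absurd rfl h
    | none, some β => exact keyA hq β
    | some α, none =>
        rw [Finset.sum_congr rfl fun x _ => Finset.sum_congr rfl fun y _ =>
          mul_comm (paleyH (some α) x y) (paleyH none x y)]
        exact keyA hq α
    | some α, some β =>
        exact keyB hq (fun hh => h (by rw [hh]))

end Aux

/-- The three-dimensional Paley matrix is a three-dimensional Hadamard matrix of
order `q + 1`: for each of the three coordinate positions and all values `a, b` of
that coordinate, the two 2-dimensional layers obtained by fixing the coordinate to
`a` and to `b` satisfy `∑ H(…,a,…)·H(…,b,…) = (q+1)²·δ_{ab}`, summing over the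
other two coordinates. -/
theorem paleyH_is_hadamard {F : Type*} [Field F] [Fintype F] [DecidableEq F]
    (hq : Odd (Fintype.card F)) :
    ∀ a b : Option F,
      (∑ x : Option F, ∑ y : Option F, paleyH x y a * paleyH x y b
        = if a = b then ((Fintype.card F : ℤ) + 1) ^ 2 else 0) ∧
      (∑ x : Option F, ∑ y : Option F, paleyH x a y * paleyH x b y
        = if a = b then ((Fintype.card F : ℤ) + 1) ^ 2 else 0) ∧
      (∑ x : Option F, ∑ y : Option F, paleyH a x y * paleyH b x y
        = if a = b then ((Fintype.card F : ℤ) + 1) ^ 2 else 0) := by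
  intro a b
  have h1 : ∀ x y : Option F, paleyH x y a * paleyH x y b = paleyH a x y * paleyH b x y :=
    fun x y => by rw [paleyH_cyc x y a, paleyH_cyc x y b]
  have h2 : ∀ x y : Option F, paleyH x a y * paleyH x b y = paleyH a y x * paleyH b y x :=
    fun x y => by rw [paleyH_cyc x a y, paleyH_cyc y x a, paleyH_cyc x b y, paleyH_cyc y x b]
  refine ⟨?_, ?_, layer_orth hq a b⟩
  · rw [Finset.sum_congr rfl fun x _ => Finset.sum_congr rfl fun y _ => h1 x y]
    exact layer_orth hq a b
  · rw [Finset.sum_congr rfl fun x _ => Finset.sum_congr rfl fun y _ => h2 x y,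
      Finset.sum_comm]
    exact layer_orth hq a b
end

section
/- Let q be a prime power with q ≡ 3 (mod 4). The Paley type I matrix h on PG(1,q), defined by h(x,y) = -1 if x = y = ∞; h(x,y) = 1 if x = y ≠ ∞ or exactly one of x, y equals ∞; and h(x,y) = χ(y-x) otherwise, is a Hadamard matrix of order q+1: its rows are pairwise orthogonal, i.e. ∑_{y ∈ PG(1,q)} h(a,y)·h(b,y) = (q+1)·δ_{ab} for all a, b ∈ PG(1,q). -/
open Finset

/-- The Paley type I matrix on `PG(1,q) = {∞} ∪ 𝔽_q` (with `none = ∞`):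
`h(x,y) = -1` if `x = y = ∞`; `h(x,y) = 1` if `x = y ≠ ∞` or exactly one of
`x, y` equals `∞`; and `h(x,y) = χ(y-x)` for distinct `x, y ∈ 𝔽_q`. -/
noncomputable def paleyI {F : Type*} [Field F] [DecidableEq F] :
    Option F → Option F → ℤ := fun x y =>
  match x, y with
  | none, none => -1
  | none, some _ => 1
  | some _, none => 1
  | some a, some b => if a = b then 1 else chi (b - a)

lemma chi_eq_quadraticChar {F : Type*} [Field F] [Fintype F] [DecidableEq F]
    {a : F} (ha : a ≠ 0) : chi a = quadraticChar F a := by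
  simp [chi, quadraticChar_apply, quadraticCharFun, ha]

/-- Main character-sum lemma: `∑_c χ(c) χ(c-d) = -1` for `d ≠ 0`. -/
lemma key_sum {F : Type*} [Field F] [Fintype F] [DecidableEq F]
    (hF2 : ringChar F ≠ 2) {d : F} (hd : d ≠ 0) :
    ∑ c : F, quadraticChar F c * quadraticChar F (c - d) = -1 := by
  classical
  have h0 : ∑ c : F, quadraticChar F c * quadraticChar F (c - d)
      = ∑ c ∈ univ \ {0}, quadraticChar F c * quadraticChar F (c - d) := by
    rw [Finset.sum_sdiff_eq_sub (Finset.subset_univ _)]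
    simp
  have h1 : ∀ c ∈ univ \ ({0} : Finset F),
      quadraticChar F c * quadraticChar F (c - d)
        = quadraticChar F (1 - d * c⁻¹) := by
    intro c hc
    have hc0 : c ≠ 0 := by simpa using hc
    have hcd : c - d = c * (1 - d * c⁻¹) := by field_simp
    rw [hcd, map_mul, ← mul_assoc, ← pow_two, quadraticChar_sq_one hc0, one_mul]
  rw [h0, Finset.sum_congr rfl h1]
  have h2 : ∑ c ∈ univ \ ({0} : Finset F), quadraticChar F (1 - d * c⁻¹)
      = ∑ u ∈ univ \ ({1} : Finset F), quadraticChar F u := by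
    apply Finset.sum_nbij' (fun c => 1 - d * c⁻¹) (fun u => d * (1 - u)⁻¹)
    · intro c hc
      have hc0 : c ≠ 0 := by simpa using hc
      simp only [Finset.mem_sdiff, Finset.mem_univ, Finset.mem_singleton, true_and]
      intro h
      have : d * c⁻¹ = 0 := by linear_combination -h
      simp [hd, hc0] at this
    · intro u hu
      have hu1 : u ≠ 1 := by simpa using hu
      have : (1 : F) - u ≠ 0 := sub_ne_zero.mpr (Ne.symm hu1)
      simp only [Finset.mem_sdiff, Finset.mem_univ, Finset.mem_singleton, true_and]
      exact mul_ne_zero hd (inv_ne_zero this)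
    · intro c hc
      have hc0 : c ≠ 0 := by simpa using hc
      field_simp
      rw [sub_sub_cancel, div_self hd]
    · intro u hu
      have hu1 : u ≠ 1 := by simpa using hu
      have h1u : (1 : F) - u ≠ 0 := sub_ne_zero.mpr (Ne.symm hu1)
      field_simp
      exact sub_sub_cancel 1 u
    · intro c hc; rfl
  rw [h2, Finset.sum_sdiff_eq_sub (Finset.subset_univ _), quadraticChar_sum_zero hF2]
  simp

/-- For `q ≡ 3 (mod 4)`, the Paley type I matrix is a Hadamard matrix of order
`q + 1`: its rows are pairwise orthogonal,
`∑_{y ∈ PG(1,q)} h(a,y)·h(b,y) = (q+1)·δ_{ab}`. -/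
theorem paleyI_is_hadamard {F : Type*} [Field F] [Fintype F] [DecidableEq F]
    (hq : Fintype.card F % 4 = 3) :
    ∀ a b : Option F,
      ∑ y : Option F, paleyI a y * paleyI b y
        = if a = b then (Fintype.card F : ℤ) + 1 else 0 := by
  classical
  have hF2 : ringChar F ≠ 2 := by
    intro h
    have := FiniteField.even_card_iff_char_two.mp h
    omega
  have hneg : quadraticChar F (-1) = -1 := by
    rw [quadraticChar_neg_one_iff_not_isSquare, FiniteField.isSquare_neg_one_iff]
    simpa using hq
  -- the inner entries rewritten via quadraticChar
  have hterm : ∀ x c : F, (if x = c then (1:ℤ) else chi (c - x))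
      = quadraticChar F (c - x) + (if x = c then 1 else 0) := by
    intro x c
    by_cases h : x = c
    · simp [h]
    · have hne : c - x ≠ 0 := sub_ne_zero.mpr (Ne.symm h)
      simp [h, chi_eq_quadraticChar hne]
  have hshift : ∀ x : F, ∑ c : F, quadraticChar F (c - x) = 0 := by
    intro x
    calc ∑ c : F, quadraticChar F (c - x) = ∑ c : F, quadraticChar F c :=
          Fintype.sum_equiv (Equiv.subRight x) _ _ (fun c => rfl)
      _ = 0 := quadraticChar_sum_zero hF2
  intro a b
  match a, b with
  | none, none =>
      simp [paleyI, Fintype.sum_option, add_comm]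
  | none, some x =>
      simp only [paleyI, Fintype.sum_option, one_mul, neg_mul, one_mul]
      simp_rw [hterm]
      rw [Finset.sum_add_distrib, hshift x, Finset.sum_ite_eq]
      simp
  | some x, none =>
      simp only [paleyI, Fintype.sum_option, mul_one, mul_neg, one_mul]
      simp_rw [hterm]
      rw [Finset.sum_add_distrib, hshift x, Finset.sum_ite_eq]
      simp
  | some x, some y =>
      by_cases hxy : x = y
      · subst hxy
        simp only [paleyI, Fintype.sum_option, mul_one]
        have : ∀ c : F, (if x = c then (1:ℤ) else chi (c - x))
            * (if x = c then (1:ℤ) else chi (c - x)) = 1 := by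
          intro c
          by_cases h : x = c
          · simp [h]
          · simp only [h, if_false, chi]
            split_ifs <;> norm_num
        simp_rw [this]
        simp [add_comm]
      · have hd : y - x ≠ 0 := sub_ne_zero.mpr (Ne.symm hxy)
        have hd' : x - y ≠ 0 := sub_ne_zero.mpr hxy
        simp only [paleyI, Fintype.sum_option, mul_one]
        simp_rw [hterm, add_mul, mul_add, Finset.sum_add_distrib]
        have e1 : ∑ c : F, quadraticChar F (c - x) * quadraticChar F (c - y) = -1 := by
          calc ∑ c : F, quadraticChar F (c - x) * quadraticChar F (c - y)
              = ∑ z : F, quadraticChar F z * quadraticChar F (z - (y - x)) :=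
                Fintype.sum_equiv (Equiv.subRight x) _ _ (fun c => by
                  show quadraticChar F (c - x) * quadraticChar F (c - y)
                      = quadraticChar F (c - x) * quadraticChar F (c - x - (y - x))
                  rw [show c - x - (y - x) = c - y by ring])
            _ = -1 := key_sum hF2 hd
        have e2 : ∑ c : F, quadraticChar F (c - x) * (if y = c then (1:ℤ) else 0)
            = quadraticChar F (y - x) := by
          simp_rw [mul_ite, mul_one, mul_zero]
          rw [Finset.sum_ite_eq]
          simp
        have e3 : ∑ c : F, (if x = c then (1:ℤ) else 0) * quadraticChar F (c - y)
            = quadraticChar F (x - y) := by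
          simp_rw [ite_mul, one_mul, zero_mul]
          rw [Finset.sum_ite_eq]
          simp
        have e4 : ∑ c : F, (if x = c then (1:ℤ) else 0) * (if y = c then (1:ℤ) else 0)
            = 0 := by
          apply Finset.sum_eq_zero
          intro c _
          by_cases h : x = c
          · have : y ≠ c := fun hyc => hxy (h.trans hyc.symm)
            simp [h, this]
          · simp [h]
        have e5 : quadraticChar F (x - y) = - quadraticChar F (y - x) := by
          have : x - y = -1 * (y - x) := by ring
          rw [this, map_mul, hneg]; ring
        rw [e1, e2, e3, e4, e5]
        simp [hxy]
end
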